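/- arXiv:1305.5531 — 13 statements merged into one kernel-verified Lean document; each statement's English description precedes it below -/
import Mathlib

section
/- Let R be a semiring, let M and N be R-semimodules and let f, g : N → M be R-linear maps. Define the relation ∼ on M by: m ∼ m' if and only if there exist n, n' ∈ N with m + f(n) + g(n') = m' + f(n') + g(n). Then ∼ is a congruence relation of R-semimodules on M, and moreover f(n) ∼ g(n) for every n ∈ N. -/
namespace AddCon

variable {M N : Type*} [AddCommMonoid M] [AddCommMonoid N]

def crossSum (f g : N →+ M) : AddCon M where
  r m m' := ∃ n n' : N, m + f n + g n' = m' + f n' + g n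
  iseqv :=
    { refl := fun m => ⟨0, 0, rfl⟩
      symm := fun ⟨n, n', e⟩ => ⟨n', n, e.symm⟩
      trans := fun {a b c} ⟨n₁, n₁', e₁⟩ ⟨n₂, n₂', e₂⟩ => ⟨n₁ + n₂, n₁' + n₂', by
        simp only [map_add]
        calc a + (f n₁ + f n₂) + (g n₁' + g n₂')
            = (a + f n₁ + g n₁') + f n₂ + g n₂' := by abel
          _ = (b + f n₂ + g n₂') + f n₁' + g n₁ := by rw [e₁]; abel
          _ = c + (f n₁' + f n₂') + (g n₁ + g n₂) := by rw [e₂]; abel⟩ }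
  add' := fun {m₁ m₁' m₂ m₂'} ⟨n₁, n₁', e₁⟩ ⟨n₂, n₂', e₂⟩ => ⟨n₁ + n₂, n₁' + n₂', by
    simp only [map_add]
    calc m₁ + m₂ + (f n₁ + f n₂) + (g n₁' + g n₂')
        = (m₁ + f n₁ + g n₁') + (m₂ + f n₂ + g n₂') := by abel
      _ = m₁' + m₂' + (f n₁' + f n₂') + (g n₁ + g n₂) := by rw [e₁, e₂]; abel⟩

theorem crossSum_apply (f g : N →+ M) (n : N) : crossSum f g (f n) (g n) :=
  ⟨0, n, by simp only [map_zero]; abel⟩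

theorem crossSum_smul {R : Type*} [Semiring R] [Module R M] [Module R N]
    (f g : N →ₗ[R] M) (c : R) {m m' : M} (h : crossSum (f : N →+ M) g m m') :
    crossSum (f : N →+ M) g (c • m) (c • m') := by
  obtain ⟨n, n', e⟩ := h
  refine ⟨c • n, c • n', ?_⟩
  simp only [AddMonoidHom.coe_coe] at e ⊢
  simp only [map_smul, ← smul_add, e]

end AddCon

/-- For `R`-linear maps `f g : N →ₗ[R] M`, the relation
`m ∼ m' ↔ ∃ n n', m + f n + g n' = m' + f n' + g n` is a congruence relation of
`R`-semimodules on `M` (an equivalence relation compatible with addition and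
scalar multiplication), and `f n ∼ g n` for every `n`. -/
theorem stmt0 {R M N : Type*} [Semiring R] [AddCommMonoid M] [Module R M]
    [AddCommMonoid N] [Module R N] (f g : N →ₗ[R] M)
    (r : M → M → Prop)
    (hr : ∀ m m' : M, r m m' ↔ ∃ n n' : N, m + f n + g n' = m' + f n' + g n) :
    Equivalence r ∧
    (∀ m m' p : M, r m m' → r (m + p) (m' + p)) ∧
    (∀ (c : R) (m m' : M), r m m' → r (c • m) (c • m')) ∧
    (∀ n : N, r (f n) (g n)) := by
  have hr : r = AddCon.crossSum (f : N →+ M) g := by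
    ext m m'
    exact hr m m'
  subst hr
  exact ⟨⟨AddCon.refl _, AddCon.symm _, AddCon.trans _⟩,
    fun _ _ p h => AddCon.add _ h (AddCon.refl _ p),
    fun c _ _ => AddCon.crossSum_smul f g c, AddCon.crossSum_apply _ _⟩
end

section
/- Let R be a semiring, let M and N be R-semimodules and let f, g : N → M be R-linear maps. Define the one-step relation S on M by: S m m' if and only if there exist m₁ ∈ M and n, n' ∈ N with m = m₁ + f(n) + g(n') and m' = m₁ + f(n') + g(n). Then the reflexive–transitive closure of S is symmetric, hence an equivalence relation, and is a congruence relation of R-semimodules on M. -/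
/-! The one-step relation is symmetric (swap `n` and `n'`), and it is carried into itself by
every translation `· + p` and every homothety `c • ·`, since these act on `m₁ + f n + g n'`
termwise and commute with `f` and `g`. Both properties pass to the reflexive–transitive
closure. -/

namespace LinearMap

variable {R M N : Type*} [Semiring R] [AddCommMonoid M] [Module R M]
  [AddCommMonoid N] [Module R N]

def coequalizerStep (f g : N →ₗ[R] M) (m m' : M) : Prop :=
  ∃ (m₁ : M) (n n' : N), m = m₁ + f n + g n' ∧ m' = m₁ + f n' + g n

variable {f g : N →ₗ[R] M}

instance : Std.Symm (coequalizerStep f g) where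
  symm _ _ := fun ⟨m₁, n, n', hm, hm'⟩ ↦ ⟨m₁, n', n, hm', hm⟩

theorem coequalizerStep.add_right {m m' : M} (h : coequalizerStep f g m m') (p : M) :
    coequalizerStep f g (m + p) (m' + p) := by
  obtain ⟨m₁, n, n', rfl, rfl⟩ := h
  exact ⟨m₁ + p, n, n', by ac_rfl, by ac_rfl⟩

theorem coequalizerStep.smul {m m' : M} (h : coequalizerStep f g m m') (c : R) :
    coequalizerStep f g (c • m) (c • m') := by
  obtain ⟨m₁, n, n', rfl, rfl⟩ := h
  exact ⟨c • m₁, c • n, c • n', by simp only [smul_add, map_smul],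
    by simp only [smul_add, map_smul]⟩

end LinearMap

theorem Relation.equivalence_reflTransGen {α : Type*} (r : α → α → Prop) [Std.Symm r] :
    Equivalence (ReflTransGen r) :=
  ⟨fun _ ↦ .refl, fun h ↦ symm h, .trans⟩

/-- For `R`-linear maps `f g : N →ₗ[R] M`, the reflexive-transitive
closure of the one-step relation
`S m m' ↔ ∃ m₁ n n', m = m₁ + f n + g n' ∧ m' = m₁ + f n' + g n`
is symmetric, hence an equivalence relation, and is a congruence relation of
`R`-semimodules on `M`. -/
theorem stmt1 {R M N : Type*} [Semiring R] [AddCommMonoid M] [Module R M]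
    [AddCommMonoid N] [Module R N] (f g : N →ₗ[R] M)
    (S : M → M → Prop)
    (hS : ∀ m m' : M, S m m' ↔ ∃ (m₁ : M) (n n' : N),
        m = m₁ + f n + g n' ∧ m' = m₁ + f n' + g n) :
    (∀ m m' : M, Relation.ReflTransGen S m m' → Relation.ReflTransGen S m' m) ∧
    Equivalence (Relation.ReflTransGen S) ∧
    (∀ m m' p : M, Relation.ReflTransGen S m m' →
      Relation.ReflTransGen S (m + p) (m' + p)) ∧
    (∀ (c : R) (m m' : M), Relation.ReflTransGen S m m' →
      Relation.ReflTransGen S (c • m) (c • m')) := by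
  obtain rfl : S = LinearMap.coequalizerStep f g := funext₂ fun m m' ↦ propext (hS m m')
  exact ⟨fun _ _ h ↦ symm h, Relation.equivalence_reflTransGen _,
    fun m m' p ↦ Relation.ReflTransGen.lift (· + p) (fun _ _ h ↦ h.add_right p) m m',
    fun c m m' ↦ Relation.ReflTransGen.lift (c • ·) (fun _ _ h ↦ h.smul c) m m'⟩
end

section
/- Let R be a semiring, let M and N be R-semimodules and let f, g : N → M be R-linear maps, and let ∼₍f,g₎ be the associated chain congruence on M. Then: (1) f(n) ∼₍f,g₎ g(n) for every n ∈ N; (2) for every R-semimodule P and every R-linear map h : M → P with h ∘ f = h ∘ g, if m ∼₍f,g₎ m' then h(m) = h(m'). (Consequently the quotient of M by ∼₍f,g₎ is a coequalizer of f and g in the category of R-semimodules.) -/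
universe u v w x

section ChainStep

variable {F G M N P : Type*} [FunLike F N M]

def chainStep [Add M] (f g : F) (m m' : M) : Prop :=
  ∃ (m₁ : M) (n n' : N), m = m₁ + f n + g n' ∧ m' = m₁ + f n' + g n

theorem chainStep_apply_apply [AddZeroClass M] [AddZeroClass N] [AddMonoidHomClass F N M]
    (f g : F) (n : N) : chainStep f g (f n) (g n) :=
  ⟨0, n, 0, by simp, by simp⟩

variable [Add M] [AddCommSemigroup P] [FunLike G M P] [AddHomClass G M P]

theorem apply_eq_of_chainStep {f g : F} {h : G} (hfg : ∀ n, h (f n) = h (g n)) {m m' : M}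
    (hm : chainStep f g m m') : h m = h m' := by
  obtain ⟨m₁, n, n', rfl, rfl⟩ := hm
  simp only [map_add, hfg n, hfg n']
  exact add_right_comm _ _ _

theorem apply_eq_of_reflTransGen_chainStep {f g : F} {h : G} (hfg : ∀ n, h (f n) = h (g n))
    {m m' : M} (hm : Relation.ReflTransGen (chainStep f g) m m') : h m = h m' :=
  Relation.reflTransGen_le_of_equivalence_of_le (eq_equivalence.comap h)
    (fun _ _ ↦ apply_eq_of_chainStep hfg) m m' hm

end ChainStep

/-- For `R`-linear maps `f g : N →ₗ[R] M` and the chain congruence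
`∼₍f,g₎` (the reflexive-transitive closure of the one-step relation `S`):
(1) `f n ∼₍f,g₎ g n` for every `n`;
(2) for every `R`-semimodule `P` and every `R`-linear `h : M →ₗ[R] P` with
`h ∘ f = h ∘ g`, `m ∼₍f,g₎ m'` implies `h m = h m'`. -/
theorem stmt2 {R : Type u} {M : Type v} {N : Type w} [Semiring R]
    [AddCommMonoid M] [Module R M] [AddCommMonoid N] [Module R N]
    (f g : N →ₗ[R] M)
    (S : M → M → Prop)
    (hS : ∀ m m' : M, S m m' ↔ ∃ (m₁ : M) (n n' : N),
        m = m₁ + f n + g n' ∧ m' = m₁ + f n' + g n) :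
    (∀ n : N, Relation.ReflTransGen S (f n) (g n)) ∧
    (∀ (P : Type x) [AddCommMonoid P] [Module R P] (h : M →ₗ[R] P),
      (∀ n : N, h (f n) = h (g n)) →
      ∀ m m' : M, Relation.ReflTransGen S m m' → h m = h m') := by
  obtain rfl : S = chainStep f g := funext₂ fun m m' ↦ propext (hS m m')
  exact ⟨fun n ↦ .single (chainStep_apply_apply f g n),
    fun _ _ _ _ hfg _ _ ↦ apply_eq_of_reflTransGen_chainStep hfg⟩
end

section
/- Let R be a semiring, let M and N be R-semimodules and let f, g : N → M be R-linear maps. Then for all m, m' ∈ M: m ∼₍f,g₎ m' holds if and only if h(m) = h(m') for every R-semimodule P and every R-linear map h : M → P satisfying h ∘ f = h ∘ g. That is, the chain congruence ∼₍f,g₎ coincides with the congruence ∼₍⟨f,g⟩₎ defined by separating homomorphisms. -/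
universe u v w

/-! The chain relation `∼₍f,g₎` is already a congruence of semimodules: it is an equivalence, and
each elementary move survives adding an element and scaling. Hence the quotient map
`M → M/∼₍f,g₎` is itself a separating homomorphism, which gives the hard direction; the easy
direction holds because every separating `h` is constant along elementary moves. -/

namespace ModuleCon

variable {R M : Type*} [Semiring R] [AddCommMonoid M] [Module R M]

def mkQ (c : ModuleCon R M) : M →ₗ[R] c.Quotient where
  toFun := Quotient.mk c.toSetoid
  map_add' _ _ := rfl
  map_smul' _ _ := rfl

theorem mkQ_eq_iff (c : ModuleCon R M) {a b : M} : c.mkQ a = c.mkQ b ↔ c.r a b :=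
  Quotient.eq

end ModuleCon

namespace LinearMap

variable {R M N P : Type*} [Semiring R] [AddCommMonoid M] [Module R M]
  [AddCommMonoid N] [Module R N] [AddCommMonoid P] [Module R P]

def CoeqStep (f g : N →ₗ[R] M) (m m' : M) : Prop :=
  ∃ (m₁ : M) (n n' : N), m = m₁ + f n + g n' ∧ m' = m₁ + f n' + g n

variable {f g : N →ₗ[R] M}

theorem coeqStep_symm {a b : M} : CoeqStep f g a b → CoeqStep f g b a :=
  fun ⟨m₁, n, n', ha, hb⟩ => ⟨m₁, n', n, hb, ha⟩

instance : Std.Symm (CoeqStep f g) := ⟨fun _ _ => coeqStep_symm⟩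

theorem coeqStep_add_right {a b : M} (c : M) :
    CoeqStep f g a b → CoeqStep f g (a + c) (b + c) := by
  rintro ⟨m₁, n, n', rfl, rfl⟩
  exact ⟨m₁ + c, n, n', by abel, by abel⟩

theorem coeqStep_smul (s : R) {a b : M} :
    CoeqStep f g a b → CoeqStep f g (s • a) (s • b) := by
  rintro ⟨m₁, n, n', rfl, rfl⟩
  exact ⟨s • m₁, s • n, s • n', by simp only [smul_add, map_smul],
    by simp only [smul_add, map_smul]⟩

theorem coeqStep_apply (n : N) : CoeqStep f g (f n) (g n) :=
  ⟨0, n, 0, by simp, by simp⟩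

theorem reflTransGen_coeqStep_add {a a' b b' : M}
    (ha : Relation.ReflTransGen (CoeqStep f g) a a')
    (hb : Relation.ReflTransGen (CoeqStep f g) b b') :
    Relation.ReflTransGen (CoeqStep f g) (a + b) (a' + b') := by
  refine (ha.lift (· + b) fun _ _ => coeqStep_add_right b).trans ?_
  simpa only [add_comm a'] using hb.lift (· + a') fun _ _ => coeqStep_add_right a'

variable (f g) in
def coeqCon : ModuleCon R M where
  r := Relation.ReflTransGen (CoeqStep f g)
  iseqv := ⟨fun _ => .refl, Std.Symm.symm _ _, .trans⟩
  add' := reflTransGen_coeqStep_add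
  smul s _ _ h := h.lift (s • ·) fun _ _ => coeqStep_smul s

theorem apply_eq_of_coeqStep {h : M →ₗ[R] P} (hfg : ∀ n, h (f n) = h (g n)) {a b : M} :
    CoeqStep f g a b → h a = h b := by
  rintro ⟨m₁, n, n', rfl, rfl⟩
  simp only [map_add, hfg]
  abel

theorem apply_eq_of_reflTransGen_coeqStep {h : M →ₗ[R] P} (hfg : ∀ n, h (f n) = h (g n))
    {a b : M} (hab : Relation.ReflTransGen (CoeqStep f g) a b) : h a = h b := by
  induction hab with
  | refl => rfl
  | tail _ hstep ih => exact ih.trans (apply_eq_of_coeqStep hfg hstep)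

end LinearMap

open LinearMap in
/-- The chain congruence `∼₍f,g₎` (reflexive-transitive closure of
the one-step relation `S`) coincides with the congruence `∼₍⟨f,g⟩₎` defined by
separating homomorphisms: `m ∼₍f,g₎ m'` iff `h m = h m'` for every
`R`-semimodule `P` and every `R`-linear `h : M →ₗ[R] P` with `h ∘ f = h ∘ g`. -/
theorem stmt3 {R : Type u} {M : Type v} {N : Type w} [Semiring R]
    [AddCommMonoid M] [Module R M] [AddCommMonoid N] [Module R N]
    (f g : N →ₗ[R] M)
    (S : M → M → Prop)
    (hS : ∀ m m' : M, S m m' ↔ ∃ (m₁ : M) (n n' : N),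
        m = m₁ + f n + g n' ∧ m' = m₁ + f n' + g n)
    (m m' : M) :
    Relation.ReflTransGen S m m' ↔
      ∀ (P : Type v) [AddCommMonoid P] [Module R P] (h : M →ₗ[R] P),
        (∀ n : N, h (f n) = h (g n)) → h m = h m' := by
  obtain rfl : S = CoeqStep f g := funext₂ fun a b => propext (hS a b)
  refine ⟨fun hmm' P _ _ h hfg => apply_eq_of_reflTransGen_coeqStep hfg hmm', fun hsep => ?_⟩
  exact (coeqCon f g).mkQ_eq_iff.1 <| hsep _ (coeqCon f g).mkQ fun n =>
    (coeqCon f g).mkQ_eq_iff.2 (.single (coeqStep_apply n))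
end

section
/- Consider the two additive monoid homomorphisms f, g : ℕ → ℕ given by f(n) = 4n and g(n) = 6n. Then (1) there exist n, n' ∈ ℕ with 0 + 4n + 6n' = 2 + 4n' + 6n (so 0 and 2 are related under the relation ∼₍[f,g]₎ of one-step witnesses), but (2) there exists an additive commutative monoid P and an additive monoid homomorphism h : ℕ → P with h(4n) = h(6n) for all n ∈ ℕ and h(0) ≠ h(2); in particular 0 and 2 are not identified in the coequalizer of f and g, so ∼₍[f,g]₎ is not the coequalizer congruence. -/
/-!
Any nonzero additively idempotent element `p` (such as `⊤ : ℕ∞`) gives a homomorphism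
`n ↦ n • p` out of `ℕ` that only detects whether `n = 0`. It therefore identifies `4n` with `6n`
but separates `0` from `2`, although `0 + 4·2 + 6·3 = 2 + 4·3 + 6·2`.
-/

theorem nsmul_eq_self_of_add_self {M : Type*} [AddMonoid M] {p : M} (hp : p + p = p) {n : ℕ}
    (hn : n ≠ 0) : n • p = p := by
  obtain ⟨k, rfl⟩ := Nat.exists_eq_succ_of_ne_zero hn
  induction k with
  | zero => exact one_nsmul p
  | succ k ih => rw [succ_nsmul, ih k.succ_ne_zero, hp]

theorem mul_nsmul_eq_mul_nsmul_of_add_self {M : Type*} [AddMonoid M] {p : M} (hp : p + p = p)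
    {a b : ℕ} (ha : a ≠ 0) (hb : b ≠ 0) (n : ℕ) : (a * n) • p = (b * n) • p := by
  rcases eq_or_ne n 0 with rfl | hn
  · simp only [mul_zero]
  · rw [nsmul_eq_self_of_add_self hp (mul_ne_zero ha hn),
      nsmul_eq_self_of_add_self hp (mul_ne_zero hb hn)]

/-- For the homomorphisms `f n = 4 * n` and `g n = 6 * n` on `ℕ`:
(1) `0 ∼₍[f,g]₎ 2`, i.e. there are `n n'` with `0 + 4n + 6n' = 2 + 4n' + 6n`;
(2) yet there is a commutative monoid `P` and an additive monoid homomorphism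
`h : ℕ →+ P` with `h (4n) = h (6n)` for all `n` and `h 0 ≠ h 2`; so `0` and `2`
are not identified in the coequalizer of `f` and `g`, and `∼₍[f,g]₎` is not the
coequalizer congruence. -/
theorem stmt4 :
    (∃ n n' : ℕ, 0 + 4 * n + 6 * n' = 2 + 4 * n' + 6 * n) ∧
    (∃ (P : Type) (_ : AddCommMonoid P) (h : ℕ →+ P),
      (∀ n : ℕ, h (4 * n) = h (6 * n)) ∧ h 0 ≠ h 2) := by
  have top_add_top : (⊤ : ℕ∞) + ⊤ = ⊤ := top_add ⊤
  refine ⟨⟨2, 3, rfl⟩, ℕ∞, inferInstance, multiplesHom ℕ∞ ⊤,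
    mul_nsmul_eq_mul_nsmul_of_add_self top_add_top (by norm_num) (by norm_num), ?_⟩
  simp only [multiplesHom_apply, zero_nsmul, nsmul_eq_self_of_add_self top_add_top two_ne_zero]
  exact ENat.zero_ne_top
end

section
/- Let M be an additive submonoid of ℕ and let d be the period of M, i.e. d > 0, d is a difference of M, and d ≤ e for every difference e > 0 of M. If a ∈ M, a ≠ 0 and a + d ∈ M, then d divides a. -/
/-!
Write `a = q d + r` with `0 ≤ r < d`. From `a, a + d ∈ M` we get
`b := q (a + d) + a ∈ M` and `b + r = (q + 2) a ∈ M`, so `r` is a difference of `M`;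
minimality of `d` then forces `r = 0`.
-/

namespace AddSubmonoid

def IsDifference (M : AddSubmonoid ℕ) (e : ℕ) : Prop :=
  ∃ a ∈ M, a ≠ 0 ∧ a + e ∈ M

theorem isDifference_mod {M : AddSubmonoid ℕ} {a d : ℕ} (ha : a ∈ M) (ha0 : a ≠ 0)
    (had : a + d ∈ M) : M.IsDifference (a % d) := by
  set q := a / d
  have hsum : q * (a + d) + a + a % d = (q + 2) * a := by
    calc q * (a + d) + a + a % d = q * a + a + (d * q + a % d) := by ring
      _ = (q + 2) * a := by rw [Nat.div_add_mod]; ring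
  refine ⟨q * (a + d) + a, ?_, by omega, ?_⟩
  · exact M.add_mem (M.nsmul_mem had q) ha
  · rw [hsum]
    exact M.nsmul_mem ha (q + 2)

end AddSubmonoid

theorem stmt11_general (M : AddSubmonoid ℕ) (d : ℕ) (hd0 : 0 < d)
    (hmin : ∀ e : ℕ, 0 < e → (∃ a ∈ M, a ≠ 0 ∧ a + e ∈ M) → d ≤ e)
    (a : ℕ) (ha : a ∈ M) (ha0 : a ≠ 0) (had : a + d ∈ M) :
    d ∣ a := by
  by_contra hnd
  have hr0 : 0 < a % d := Nat.pos_of_ne_zero fun h => hnd (Nat.dvd_of_mod_eq_zero h)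
  have hle : d ≤ a % d := hmin _ hr0 (AddSubmonoid.isDifference_mod ha ha0 had)
  exact (Nat.mod_lt a hd0).not_ge hle

/-- Let `d` be the period of the additive submonoid `M` of `ℕ`,
i.e. the least positive difference of `M`. If `a ∈ M`, `a ≠ 0` and
`a + d ∈ M`, then `d` divides `a`. -/
theorem stmt11 (M : AddSubmonoid ℕ) (d : ℕ) (hd0 : 0 < d)
    (hdiff : ∃ a ∈ M, a ≠ 0 ∧ a + d ∈ M)
    (hmin : ∀ e : ℕ, 0 < e → (∃ a ∈ M, a ≠ 0 ∧ a + e ∈ M) → d ≤ e)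
    (a : ℕ) (ha : a ∈ M) (ha0 : a ≠ 0) (had : a + d ∈ M) :
    d ∣ a :=
  stmt11_general M d hd0 hmin a ha ha0 had
end

section
/- Let M be a nonzero additive submonoid of ℕ with period d. Then there exists c ∈ M with c ≠ 0 such that for every natural number c': (c' ∈ M and c ≤ c') holds if and only if c' = c + n·d for some n ∈ ℕ. In particular there is a least such c (called the footing of M). -/
/-!
If `a` and `a + d` lie in `M`, then writing `n = q * a + r` with `r < a` gives
`a * a + n * d = (a - r) * a + r * (a + d) + (q * d) * a ∈ M`, so `M` contains the whole
progression `a * a + dℕ`. Conversely, minimality of the period forces every difference of `M`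
to be a multiple of `d`: a remainder `0 < r < d` would itself be a difference. Hence above
`a * a` the monoid is exactly `a * a + dℕ`, so a least nonzero `c` with this property exists.
-/

namespace AddSubmonoid

variable {M : AddSubmonoid ℕ} {d : ℕ}

def IsProgressionTail (M : AddSubmonoid ℕ) (d c : ℕ) : Prop :=
  ∀ c' : ℕ, (c' ∈ M ∧ c ≤ c') ↔ ∃ n : ℕ, c' = c + n * d

theorem IsProgressionTail.mem {c : ℕ} (h : IsProgressionTail M d c) : c ∈ M :=
  ((h c).2 ⟨0, by simp⟩).1

theorem nat_mul_mem {x : ℕ} (hx : x ∈ M) (k : ℕ) : k * x ∈ M := by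
  simpa using M.nsmul_mem hx k

theorem mul_self_add_mul_mem {a : ℕ} (ha : a ∈ M) (had : a + d ∈ M) (n : ℕ) :
    a * a + n * d ∈ M := by
  rcases Nat.eq_zero_or_pos a with rfl | ha0
  · simpa using nat_mul_mem had n
  have hsplit : a * a + n * d = (a - n % a) * a + n % a * (a + d) + (n / a * d) * a := by
    have hn := Nat.div_add_mod n a
    obtain ⟨s, hs⟩ := Nat.exists_eq_add_of_le (Nat.mod_lt n ha0).le
    generalize n / a = q, n % a = r at hn hs ⊢
    subst hn hs
    rw [Nat.add_sub_cancel_left]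
    ring
  rw [hsplit]
  exact M.add_mem (M.add_mem (nat_mul_mem ha _) (nat_mul_mem had _)) (nat_mul_mem ha _)

theorem period_dvd_of_add_mem (hd0 : 0 < d) {a : ℕ} (ha : a ∈ M) (had : a + d ∈ M)
    (hmin : ∀ e : ℕ, 0 < e → (∃ a ∈ M, a ≠ 0 ∧ a + e ∈ M) → d ≤ e)
    {b e : ℕ} (hb : b ∈ M) (hb0 : b ≠ 0) (hbe : b + e ∈ M) : d ∣ e := by
  refine Nat.dvd_of_mod_eq_zero (Nat.eq_zero_of_not_pos fun hr => ?_)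
  have hdiff : b + e / d * (a + d) + e % d = (b + e) + e / d * a := by
    have := Nat.div_add_mod e d
    rw [Nat.mul_comm] at this
    linarith
  have hle : d ≤ e % d :=
    hmin _ hr ⟨_, M.add_mem hb (nat_mul_mem had _), by omega,
      hdiff ▸ M.add_mem hbe (nat_mul_mem ha _)⟩
  exact absurd (Nat.mod_lt e hd0) (not_lt.2 hle)

theorem isProgressionTail_mul_self (hd0 : 0 < d) {a : ℕ} (ha : a ∈ M) (ha0 : a ≠ 0)
    (had : a + d ∈ M) (hmin : ∀ e : ℕ, 0 < e → (∃ a ∈ M, a ≠ 0 ∧ a + e ∈ M) → d ≤ e) :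
    IsProgressionTail M d (a * a) := by
  intro c'
  constructor
  · rintro ⟨hc', hle⟩
    obtain ⟨k, hk⟩ := period_dvd_of_add_mem hd0 ha had hmin (nat_mul_mem ha a)
      (Nat.mul_ne_zero ha0 ha0) (show a * a + (c' - a * a) ∈ M by rwa [Nat.add_sub_cancel' hle])
    exact ⟨k, by rw [Nat.mul_comm k, ← hk, Nat.add_sub_cancel' hle]⟩
  · rintro ⟨n, rfl⟩
    exact ⟨mul_self_add_mul_mem ha had n, Nat.le_add_right _ _⟩

end AddSubmonoid

theorem stmt12_general (M : AddSubmonoid ℕ) (d : ℕ) (hd0 : 0 < d)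
    (hdiff : ∃ a ∈ M, a ≠ 0 ∧ a + d ∈ M)
    (hmin : ∀ e : ℕ, 0 < e → (∃ a ∈ M, a ≠ 0 ∧ a + e ∈ M) → d ≤ e) :
    ∃ c ∈ M, c ≠ 0 ∧
      (∀ c' : ℕ, (c' ∈ M ∧ c ≤ c') ↔ ∃ n : ℕ, c' = c + n * d) ∧
      (∀ c'' ∈ M, c'' ≠ 0 →
        (∀ c' : ℕ, (c' ∈ M ∧ c'' ≤ c') ↔ ∃ n : ℕ, c' = c'' + n * d) →
        c ≤ c'') := by
  classical
  obtain ⟨a, haM, ha0, had⟩ := hdiff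
  have hex : ∃ c, c ≠ 0 ∧ AddSubmonoid.IsProgressionTail M d c :=
    ⟨a * a, by positivity, AddSubmonoid.isProgressionTail_mul_self hd0 haM ha0 had hmin⟩
  obtain ⟨hc0, hc⟩ := Nat.find_spec hex
  exact ⟨Nat.find hex, hc.mem, hc0, hc, fun c'' _ hc''0 hc'' => Nat.find_min' hex ⟨hc''0, hc''⟩⟩

/-- Let `M` be a nonzero additive submonoid of `ℕ` with period
`d` (the least positive difference of `M`). Then there is `c ∈ M`, `c ≠ 0`,
such that for every `c'`: `c' ∈ M ∧ c ≤ c'` iff `c' = c + n * d` for some `n`;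
and there is a least such `c` (the footing of `M`). -/
theorem stmt12 (M : AddSubmonoid ℕ) (hM : M ≠ ⊥) (d : ℕ) (hd0 : 0 < d)
    (hdiff : ∃ a ∈ M, a ≠ 0 ∧ a + d ∈ M)
    (hmin : ∀ e : ℕ, 0 < e → (∃ a ∈ M, a ≠ 0 ∧ a + e ∈ M) → d ≤ e) :
    ∃ c ∈ M, c ≠ 0 ∧
      (∀ c' : ℕ, (c' ∈ M ∧ c ≤ c') ↔ ∃ n : ℕ, c' = c + n * d) ∧
      (∀ c'' ∈ M, c'' ≠ 0 →
        (∀ c' : ℕ, (c' ∈ M ∧ c'' ≤ c') ↔ ∃ n : ℕ, c' = c'' + n * d) →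
        c ≤ c'') :=
  stmt12_general M d hd0 hdiff hmin
end

section
/- Let M be a nonzero additive submonoid of ℕ with period d. Then d divides every element of M, and d is the greatest common divisor of the elements of M: any natural number e that divides every element of M also divides d. -/
/-!
If `a` and `a + d` lie in `M`, then for `m ∈ M` the element `x = a + (m / d) • (a + d)` of `M`
satisfies `x + m % d = (m / d + 1) • a + m ∈ M`, so a nonzero remainder `m % d` would be a
positive difference smaller than `d`. Conversely every common divisor of `a` and `a + d`
divides `d`.
-/

namespace AddSubmonoid

variable {M : AddSubmonoid ℕ} {d m : ℕ}

theorem IsDifference.mod_of_mem (hd : M.IsDifference d) (hm : m ∈ M) :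
    M.IsDifference (m % d) := by
  obtain ⟨a, ha, ha0, had⟩ := hd
  refine ⟨a + (m / d) • (a + d), add_mem ha (nsmul_mem had _), by positivity, ?_⟩
  have key : a + (m / d) • (a + d) + m % d = (m / d + 1) • a + m := by
    have := Nat.div_add_mod m d
    simp only [smul_eq_mul]
    linear_combination this
  rw [key]
  exact add_mem (nsmul_mem ha _) hm

theorem IsDifference.dvd_of_mem (hd : M.IsDifference d) (hd0 : 0 < d)
    (hmin : ∀ e, 0 < e → M.IsDifference e → d ≤ e) (hm : m ∈ M) : d ∣ m := by
  by_contra hdm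
  have hr : 0 < m % d := Nat.pos_of_ne_zero (mt Nat.dvd_of_mod_eq_zero hdm)
  exact absurd (hmin _ hr (hd.mod_of_mem hm)) (Nat.mod_lt m hd0).not_ge

theorem IsDifference.dvd_of_forall_mem_dvd {e : ℕ} (hd : M.IsDifference d)
    (he : ∀ m ∈ M, e ∣ m) : e ∣ d := by
  obtain ⟨a, ha, -, had⟩ := hd
  exact (Nat.dvd_add_right (he a ha)).mp (he _ had)

end AddSubmonoid

theorem stmt13_general (M : AddSubmonoid ℕ) (d : ℕ) (hd0 : 0 < d)
    (hdiff : ∃ a ∈ M, a ≠ 0 ∧ a + d ∈ M)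
    (hmin : ∀ e : ℕ, 0 < e → (∃ a ∈ M, a ≠ 0 ∧ a + e ∈ M) → d ≤ e) :
    (∀ m ∈ M, d ∣ m) ∧ (∀ e : ℕ, (∀ m ∈ M, e ∣ m) → e ∣ d) :=
  ⟨fun _ hm => AddSubmonoid.IsDifference.dvd_of_mem hdiff hd0 hmin hm,
    fun _ he => AddSubmonoid.IsDifference.dvd_of_forall_mem_dvd hdiff he⟩

/-- Let `M` be a nonzero additive submonoid of `ℕ` with period
`d` (the least positive difference of `M`). Then `d` divides every element of
`M` and `d` is the greatest common divisor of the elements of `M`: every `e`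
dividing all elements of `M` divides `d`. -/
theorem stmt13 (M : AddSubmonoid ℕ) (hM : M ≠ ⊥) (d : ℕ) (hd0 : 0 < d)
    (hdiff : ∃ a ∈ M, a ≠ 0 ∧ a + d ∈ M)
    (hmin : ∀ e : ℕ, 0 < e → (∃ a ∈ M, a ≠ 0 ∧ a + e ∈ M) → d ≤ e) :
    (∀ m ∈ M, d ∣ m) ∧ (∀ e : ℕ, (∀ m ∈ M, e ∣ m) → e ∣ d) :=
  stmt13_general M d hd0 hdiff hmin
end

section
/- Let M be a nonzero additive submonoid of ℕ, let e be the least nonzero element of M and let d be the period of M. Then there exists a finite set X ⊆ ℕ such that X generates M (the additive submonoid closure of X equals M), X is contained in every generating set of M (for every Y ⊆ ℕ whose additive submonoid closure is M, X ⊆ Y), and the cardinality of X is at most e / d. In particular X is the unique smallest generating set of M. -/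
/-!
The period `d` is the gcd of `M`: if `a, a + d ∈ M` with `a ≠ 0` and `x ∈ M`, a Bézout combination
of `x` and `d` moves some nonzero `b ∈ M` by `gcd x d` inside `M`, so minimality of `d` forces
`d ∣ x`. The irreducible elements of `M` (nonzero, not a sum of two nonzero elements) generate `M`
and lie in every generating set. Two irreducibles congruent modulo a nonzero `e ∈ M` are equal, since
the larger one would be the smaller one plus a nonzero multiple of `e`; as all of them are multiples
of `d`, `x ↦ (x % e) / d` embeds them into `[0, e / d)`.
-/

namespace AddSubmonoid

def irreducibles (M : AddSubmonoid ℕ) : Set ℕ :=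
  {x | x ∈ M ∧ x ≠ 0 ∧ ∀ y ∈ M, ∀ z ∈ M, y ≠ 0 → z ≠ 0 → y + z ≠ x}

def HasGap (M : AddSubmonoid ℕ) (g : ℕ) : Prop :=
  ∃ a ∈ M, a ≠ 0 ∧ a + g ∈ M

variable {M : AddSubmonoid ℕ}

theorem mul_mem_of_mem {x : ℕ} (n : ℕ) (hx : x ∈ M) : n * x ∈ M := by
  simpa only [smul_eq_mul] using M.nsmul_mem hx n

theorem HasGap.gcd {d x : ℕ} (hd : M.HasGap d) (hx : x ∈ M) : M.HasGap (Nat.gcd x d) := by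
  obtain ⟨a, ha, ha0, had⟩ := hd
  rcases Nat.eq_zero_or_pos d with rfl | hd0
  · exact ⟨a, ha, ha0, by simpa using M.add_mem ha hx⟩
  rcases (Nat.gcd_le_right x hd0).lt_or_eq with hlt | heq
  · obtain ⟨m, -, hm⟩ := Nat.exists_mul_mod_eq_gcd hlt
    set q := x * m / d
    refine ⟨a + q * (a + d), M.add_mem ha (mul_mem_of_mem q had), by omega, ?_⟩
    have hsplit : a + q * (a + d) + Nat.gcd x d = (q + 1) * a + m * x :=
      calc a + q * (a + d) + Nat.gcd x d = (q + 1) * a + (d * q + x * m % d) := by rw [hm]; ring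
        _ = (q + 1) * a + m * x := by rw [Nat.div_add_mod, mul_comm x m]
    rw [hsplit]
    exact M.add_mem (mul_mem_of_mem _ ha) (mul_mem_of_mem _ hx)
  · exact ⟨a, ha, ha0, by rwa [heq]⟩

theorem dvd_of_mem_of_hasGap {d x : ℕ} (hd0 : 0 < d) (hd : M.HasGap d)
    (hmin : ∀ g, 0 < g → M.HasGap g → d ≤ g) (hx : x ∈ M) : d ∣ x := by
  have hgcd : Nat.gcd x d = d :=
    (Nat.gcd_le_right x hd0).antisymm (hmin _ (Nat.gcd_pos_of_pos_right x hd0) (hd.gcd hx))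
  exact hgcd ▸ Nat.gcd_dvd_left x d

theorem closure_irreducibles (M : AddSubmonoid ℕ) : closure M.irreducibles = M := by
  refine le_antisymm (closure_le.mpr fun x hx => hx.1) fun x hx => ?_
  induction x using Nat.strong_induction_on with
  | _ x ih =>
    by_cases hx0 : x = 0
    · exact hx0 ▸ zero_mem _
    by_cases hirr : ∀ y ∈ M, ∀ z ∈ M, y ≠ 0 → z ≠ 0 → y + z ≠ x
    · exact subset_closure ⟨hx, hx0, hirr⟩
    push Not at hirr
    obtain ⟨y, hy, z, hz, hy0, hz0, rfl⟩ := hirr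
    exact add_mem (ih y (by omega) hy) (ih z (by omega) hz)

theorem irreducibles_subset_of_closure_eq {Y : Set ℕ} (hY : closure Y = M) :
    M.irreducibles ⊆ Y := by
  intro x hx
  induction (hY ▸ hx.1 : x ∈ closure Y) using closure_induction with
  | mem x hxY => exact hxY
  | zero => exact absurd rfl hx.2.1
  | add y z hy hz ihy ihz =>
    rw [hY] at hy hz
    rcases eq_or_ne y 0 with rfl | hy0
    · simpa using ihz (by simpa using hx)
    rcases eq_or_ne z 0 with rfl | hz0
    · simpa using ihy (by simpa using hx)
    exact absurd rfl (hx.2.2 y hy z hz hy0 hz0)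

theorem eq_of_modEq_of_mem_irreducibles {e x y : ℕ} (he : e ∈ M) (hx : x ∈ M.irreducibles)
    (hy : y ∈ M.irreducibles) (hxy : x ≤ y) (hmod : x ≡ y [MOD e]) : x = y := by
  obtain ⟨c, hc⟩ := (Nat.modEq_iff_dvd' hxy).mp hmod
  by_contra hne
  refine hy.2.2 x hx.1 (e * c) ?_ hx.2.1 (by omega) (by omega)
  exact mul_comm c e ▸ mul_mem_of_mem c he

theorem irreducibles_injOn_mod {e : ℕ} (he : e ∈ M) : Set.InjOn (· % e) M.irreducibles := by
  intro x hx y hy hmod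
  rcases le_total x y with hxy | hyx
  · exact eq_of_modEq_of_mem_irreducibles he hx hy hxy hmod
  · exact (eq_of_modEq_of_mem_irreducibles he hy hx hyx hmod.symm).symm

theorem irreducibles_injOn_mod_div {d e : ℕ} (hdvd : ∀ x ∈ M, d ∣ x) (he : e ∈ M) :
    Set.InjOn (fun x => x % e / d) M.irreducibles := by
  intro x hx y hy hxy
  have hmod (z : ℕ) (hz : z ∈ M) : d ∣ z % e := (Nat.dvd_mod_iff (hdvd e he)).mpr (hdvd z hz)
  exact irreducibles_injOn_mod he hx hy ((Nat.div_left_inj (hmod x hx.1) (hmod y hy.1)).mp hxy)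

end AddSubmonoid

theorem stmt14_general (M : AddSubmonoid ℕ) (e d : ℕ)
    (he : e ∈ M) (he0 : e ≠ 0)
    (hd0 : 0 < d)
    (hdiff : ∃ a ∈ M, a ≠ 0 ∧ a + d ∈ M)
    (hmin : ∀ e' : ℕ, 0 < e' → (∃ a ∈ M, a ≠ 0 ∧ a + e' ∈ M) → d ≤ e') :
    ∃ X : Finset ℕ,
      AddSubmonoid.closure (X : Set ℕ) = M ∧
      (∀ Y : Set ℕ, AddSubmonoid.closure Y = M → (X : Set ℕ) ⊆ Y) ∧
      X.card ≤ e / d := by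
  have hdvd : ∀ x ∈ M, d ∣ x := fun x hx => AddSubmonoid.dvd_of_mem_of_hasGap hd0 hdiff hmin hx
  have hinj := AddSubmonoid.irreducibles_injOn_mod_div hdvd he
  have hmaps : Set.MapsTo (fun x => x % e / d) M.irreducibles (Set.Iio (e / d)) := fun x _ =>
    Nat.div_lt_div_of_lt_of_dvd (hdvd e he) (Nat.mod_lt x (Nat.pos_of_ne_zero he0))
  have hfin : M.irreducibles.Finite := Set.Finite.of_injOn hmaps hinj (Set.finite_Iio _)
  refine ⟨hfin.toFinset, by simpa using AddSubmonoid.closure_irreducibles M,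
    fun Y hY => by simpa using AddSubmonoid.irreducibles_subset_of_closure_eq hY, ?_⟩
  calc hfin.toFinset.card ≤ (Finset.range (e / d)).card :=
        Finset.card_le_card_of_injOn _ (by simpa [Set.MapsTo] using hmaps) (by simpa using hinj)
    _ = e / d := Finset.card_range _

/-- Let `M` be a nonzero additive submonoid of `ℕ`, `e` its least
nonzero element and `d` its period. Then there is a finite set `X` generating
`M`, contained in every generating set of `M`, with at most `e / d` elements;
in particular `X` is the unique smallest generating set of `M`. -/
theorem stmt14 (M : AddSubmonoid ℕ) (hM : M ≠ ⊥) (e d : ℕ)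
    (he : e ∈ M) (he0 : e ≠ 0) (hemin : ∀ x ∈ M, x ≠ 0 → e ≤ x)
    (hd0 : 0 < d)
    (hdiff : ∃ a ∈ M, a ≠ 0 ∧ a + d ∈ M)
    (hmin : ∀ e' : ℕ, 0 < e' → (∃ a ∈ M, a ≠ 0 ∧ a + e' ∈ M) → d ≤ e') :
    ∃ X : Finset ℕ,
      AddSubmonoid.closure (X : Set ℕ) = M ∧
      (∀ Y : Set ℕ, AddSubmonoid.closure Y = M → (X : Set ℕ) ⊆ Y) ∧
      X.card ≤ e / d :=
  stmt14_general M e d he he0 hd0 hdiff hmin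
end

section
/- Let a and b be natural numbers with a > 0 and b > 0. Then a and b are relatively prime if and only if there exist r, s ∈ ℕ with (a − 1)·(b − 1) = r·a + s·b. -/
/-!
Adding `a + b` to `(a - 1) * (b - 1)` gives `a * b + 1`, so a representation
`(a - 1) * (b - 1) = r * a + s * b` makes `gcd a b` divide `a * b + 1`, hence `1`.
Conversely, for coprime `a` and `b` every number `≥ (a - 1) * (b - 1)` is a nonnegative
combination of `a` and `b` (the two-coin case of the Frobenius problem).
-/

namespace Nat

theorem sub_one_mul_sub_one_add_add {a b : ℕ} (ha : 0 < a) (hb : 0 < b) :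
    (a - 1) * (b - 1) + a + b = a * b + 1 := by
  obtain ⟨a, rfl⟩ := exists_eq_add_one_of_ne_zero ha.ne'
  obtain ⟨b, rfl⟩ := exists_eq_add_one_of_ne_zero hb.ne'
  simp only [add_tsub_cancel_right]
  ring

theorem coprime_of_sub_one_mul_sub_one_eq {a b r s : ℕ} (ha : 0 < a) (hb : 0 < b)
    (h : (a - 1) * (b - 1) = r * a + s * b) : Coprime a b := by
  have hda := gcd_dvd_left a b
  have hdb := gcd_dvd_right a b
  have hsucc : gcd a b ∣ a * b + 1 := by
    rw [← sub_one_mul_sub_one_add_add ha hb, h]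
    exact ((hda.mul_left r).add (hdb.mul_left s)).add hda |>.add hdb
  exact dvd_one.mp <| (Nat.dvd_add_right (hda.mul_right b)).mp hsucc

theorem exists_sub_one_mul_sub_one_eq_of_coprime {a b : ℕ} (h : Coprime a b) :
    ∃ r s : ℕ, (a - 1) * (b - 1) = r * a + s * b := by
  obtain ⟨r, s, hrs⟩ := exists_add_mul_eq_of_gcd_dvd_of_mul_pred_le a b _
    (h.gcd_eq_one ▸ one_dvd _) le_rfl
  exact ⟨r, s, hrs.symm⟩

end Nat

/-- For natural numbers `a, b > 0`: `a` and `b` are relatively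
prime iff there exist `r, s ∈ ℕ` with `(a - 1) * (b - 1) = r * a + s * b`. -/
theorem stmt16 (a b : ℕ) (ha : 0 < a) (hb : 0 < b) :
    Nat.gcd a b = 1 ↔ ∃ r s : ℕ, (a - 1) * (b - 1) = r * a + s * b :=
  ⟨Nat.exists_sub_one_mul_sub_one_eq_of_coprime, fun ⟨_, _, h⟩ =>
    Nat.coprime_of_sub_one_mul_sub_one_eq ha hb h⟩
end

section
/- Let a and b be positive natural numbers, and let d > 1 be a natural number dividing both a and b. Then gcd(a, b) = d if and only if there exist r, s ∈ ℕ with d·(a/d − 1)·(b/d − 1) = r·a + s·b. -/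
/-!
Write `a = d m` and `b = d n`. Then `gcd a b = d` says that `m` and `n` are coprime, and the
equation is `d` times `(m - 1)(n - 1) = r m + s n`. By Sylvester, every number exceeding the
Frobenius number `m n - m - n` of a coprime pair is a nonnegative combination of `m` and `n`,
and `(m - 1)(n - 1)` is one more than it. Conversely, any common divisor of `m` and `n` divides
`(m - 1)(n - 1) + m + n = m n + 1`, hence `1`.
-/

namespace Nat

lemma sub_one_mul_sub_one_add_add_s17 {m n : ℕ} (hm : 0 < m) (hn : 0 < n) :
    (m - 1) * (n - 1) + m + n = m * n + 1 := by
  obtain ⟨m, rfl⟩ := exists_add_one_eq.mpr hm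
  obtain ⟨n, rfl⟩ := exists_add_one_eq.mpr hn
  simp only [add_tsub_cancel_right]
  ring

lemma exists_mul_add_mul_eq_sub_one_mul_sub_one {m n : ℕ} (hmn : m.Coprime n)
    (hm : 0 < m) (hn : 0 < n) : ∃ r s : ℕ, (m - 1) * (n - 1) = r * m + s * n := by
  obtain hm1 | rfl := Nat.lt_or_eq_of_le hm
  · obtain hn1 | rfl := Nat.lt_or_eq_of_le hn
    · have hlt : m * n - m - n < (m - 1) * (n - 1) := by
        have := sub_one_mul_sub_one_add_add_s17 hm hn
        have := Nat.add_le_mul (a := m) (b := n) hm1 hn1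
        omega
      have hmem := (frobeniusNumber_pair hmn hm1 hn1).2 |>.mt (not_le.mpr hlt)
      rw [Set.mem_ofPred_eq, not_not, AddSubmonoid.mem_closure_pair] at hmem
      obtain ⟨r, s, hrs⟩ := hmem
      exact ⟨r, s, by simpa only [smul_eq_mul] using hrs.symm⟩
    · exact ⟨0, 0, by simp⟩
  · exact ⟨0, 0, by simp⟩

lemma coprime_of_sub_one_mul_sub_one_eq_s17 {m n r s : ℕ} (hm : 0 < m) (hn : 0 < n)
    (h : (m - 1) * (n - 1) = r * m + s * n) : m.Coprime n := by
  have hm' : m.gcd n ∣ m := gcd_dvd_left m n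
  have hn' : m.gcd n ∣ n := gcd_dvd_right m n
  have hsucc : m.gcd n ∣ m * n + 1 := by
    rw [← sub_one_mul_sub_one_add_add_s17 hm hn, h]
    exact ((hm'.mul_left r |>.add (hn'.mul_left s)).add hm').add hn'
  exact (Nat.dvd_add_right (hm'.mul_right n)).mp hsucc |> eq_one_of_dvd_one

lemma coprime_iff_exists_sub_one_mul_sub_one_eq {m n : ℕ} (hm : 0 < m) (hn : 0 < n) :
    m.Coprime n ↔ ∃ r s : ℕ, (m - 1) * (n - 1) = r * m + s * n :=
  ⟨fun hmn => exists_mul_add_mul_eq_sub_one_mul_sub_one hmn hm hn,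
    fun ⟨_, _, h⟩ => coprime_of_sub_one_mul_sub_one_eq_s17 hm hn h⟩

end Nat

theorem stmt17_general (a b d : ℕ) (ha : 0 < a) (hb : 0 < b)
    (hda : d ∣ a) (hdb : d ∣ b) :
    Nat.gcd a b = d ↔ ∃ r s : ℕ, d * (a / d - 1) * (b / d - 1) = r * a + s * b := by
  obtain ⟨m, rfl⟩ := hda
  obtain ⟨n, rfl⟩ := hdb
  have hd : 0 < d := Nat.pos_of_mul_pos_right ha
  have hm : 0 < m := Nat.pos_of_mul_pos_left ha
  have hn : 0 < n := Nat.pos_of_mul_pos_left hb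
  have hscale (r s : ℕ) : r * (d * m) + s * (d * n) = d * (r * m + s * n) := by ring
  simp only [Nat.mul_div_cancel_left _ hd, Nat.gcd_mul_left, mul_eq_left₀ hd.ne', mul_assoc,
    hscale, Nat.mul_left_cancel_iff hd]
  exact Nat.coprime_iff_exists_sub_one_mul_sub_one_eq hm hn

/-- For positive natural numbers `a, b` and `d > 1` dividing both
`a` and `b`: `gcd a b = d` iff there exist `r, s ∈ ℕ` with
`d * (a / d - 1) * (b / d - 1) = r * a + s * b`. -/
theorem stmt17 (a b d : ℕ) (ha : 0 < a) (hb : 0 < b) (hd : 1 < d)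
    (hda : d ∣ a) (hdb : d ∣ b) :
    Nat.gcd a b = d ↔ ∃ r s : ℕ, d * (a / d - 1) * (b / d - 1) = r * a + s * b :=
  stmt17_general a b d ha hb hda hdb
end

section
/- Let a and b be natural numbers, let d = gcd(a, b), and assume d < a and d < b (in particular a, b > 0 and d > 0). Let M be the additive submonoid of ℕ generated by {a, b} and set c = d·(a/d − 1)·(b/d − 1). Then c + n·d ∈ M for every n ∈ ℕ, while c − d ∉ M. In particular c is the footing of M: the elements of M that are ≥ c are exactly the numbers c + n·d for n ∈ ℕ. -/
/-!
Write `a = d p` and `b = d q`, so that `p` and `q` are coprime and both exceed `1`. Scaling by `d`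
identifies the monoid generated by `{a, b}` with `d` times the monoid generated by `{p, q}`,
whose Frobenius number is `K = p q - p - q` (Sylvester). Since `c = d (K + 1)`, the numbers
`c + n d` are `d` times integers above `K`, while `c - d = d K` is `d` times the Frobenius number.
-/

theorem Nat.exists_eq_add_mul_of_dvd_of_le {c d x : ℕ} (hc : d ∣ c) (hx : d ∣ x)
    (hcx : c ≤ x) : ∃ n, x = c + n * d :=
  ⟨(x - c) / d, by rw [Nat.div_mul_cancel (Nat.dvd_sub hx hc)]; omega⟩

theorem Nat.sub_one_mul_sub_one {p q : ℕ} (hp : 1 < p) (hq : 1 < q) :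
    (p - 1) * (q - 1) = p * q - p - q + 1 := by
  obtain ⟨p, rfl⟩ := Nat.exists_eq_add_of_lt hp
  obtain ⟨q, rfl⟩ := Nat.exists_eq_add_of_lt hq
  simp only [Nat.add_sub_cancel, add_mul, mul_add]
  omega

namespace AddSubmonoid

theorem closure_image_mul_left (d : ℕ) (s : Set ℕ) :
    closure ((d * ·) '' s) = (closure s).map (AddMonoidHom.mulLeft d) :=
  (AddMonoidHom.map_mclosure (AddMonoidHom.mulLeft d) s).symm

theorem mul_mem_closure_image_mul_left_iff {d : ℕ} (hd : 0 < d) {s : Set ℕ} {y : ℕ} :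
    d * y ∈ closure ((d * ·) '' s) ↔ y ∈ closure s := by
  rw [closure_image_mul_left]
  exact mem_map_iff_mem (f := AddMonoidHom.mulLeft d) fun _ _ => Nat.eq_of_mul_eq_mul_left hd

theorem dvd_of_mem_closure_image_mul_left {d : ℕ} {s : Set ℕ} {x : ℕ}
    (hx : x ∈ closure ((d * ·) '' s)) : d ∣ x := by
  rw [closure_image_mul_left, mem_map] at hx
  obtain ⟨y, -, rfl⟩ := hx
  exact Dvd.intro y rfl

end AddSubmonoid

namespace FrobeniusNumber

variable {K : ℕ} {s : Set ℕ}

theorem mul_mem_closure_image_mul_left_of_lt (h : FrobeniusNumber K s) (d : ℕ) {k : ℕ}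
    (hk : K < k) : d * k ∈ AddSubmonoid.closure ((d * ·) '' s) := by
  rw [AddSubmonoid.closure_image_mul_left]
  exact AddSubmonoid.mem_map_of_mem _ ((frobeniusNumber_iff.mp h).2 k hk)

theorem mul_notMem_closure_image_mul_left (h : FrobeniusNumber K s) {d : ℕ} (hd : 0 < d) :
    d * K ∉ AddSubmonoid.closure ((d * ·) '' s) := by
  rw [AddSubmonoid.mul_mem_closure_image_mul_left_iff hd]
  exact (frobeniusNumber_iff.mp h).1

end FrobeniusNumber

/-- Let `d = gcd a b` with `d < a` and `d < b`, let `M` be the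
additive submonoid of `ℕ` generated by `{a, b}`, and set
`c = d * (a / d - 1) * (b / d - 1)`. Then `c + n * d ∈ M` for every `n`,
`c - d ∉ M`, and the elements of `M` that are `≥ c` are exactly the numbers
`c + n * d`; that is, `c` is the footing of `M`. -/
theorem stmt18 (a b d : ℕ) (hd : d = Nat.gcd a b) (hda : d < a) (hdb : d < b)
    (M : AddSubmonoid ℕ) (hM : M = AddSubmonoid.closure ({a, b} : Set ℕ))
    (c : ℕ) (hc : c = d * (a / d - 1) * (b / d - 1)) :
    (∀ n : ℕ, c + n * d ∈ M) ∧
    c - d ∉ M ∧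
    (∀ x : ℕ, (x ∈ M ∧ c ≤ x) ↔ ∃ n : ℕ, x = c + n * d) := by
  obtain ⟨p, rfl⟩ : d ∣ a := hd ▸ Nat.gcd_dvd_left a b
  obtain ⟨q, rfl⟩ : d ∣ b := hd ▸ Nat.gcd_dvd_right _ b
  have hd0 : 0 < d := Nat.pos_of_ne_zero (by rintro rfl; omega)
  have hp : 1 < p := Nat.lt_of_mul_lt_mul_left (a := d) (by simpa using hda)
  have hq : 1 < q := Nat.lt_of_mul_lt_mul_left (a := d) (by simpa using hdb)
  have hpq : Nat.Coprime p q := by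
    rw [Nat.gcd_mul_left] at hd
    exact Nat.eq_of_mul_eq_mul_left hd0 (by rw [← hd, mul_one])
  have hF := frobeniusNumber_pair hpq hp hq
  rw [Nat.mul_div_cancel_left _ hd0, Nat.mul_div_cancel_left _ hd0, mul_assoc,
    Nat.sub_one_mul_sub_one hp hq] at hc
  rw [← Set.image_pair] at hM
  subst hM hc
  have hmem (n : ℕ) :
      d * (p * q - p - q + 1) + n * d ∈ AddSubmonoid.closure ((d * ·) '' {p, q}) := by
    rw [mul_comm n, ← mul_add]
    exact hF.mul_mem_closure_image_mul_left_of_lt d (by omega)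
  refine ⟨hmem, ?_, fun x => ⟨fun ⟨hx, hcx⟩ => ?_, ?_⟩⟩
  · rw [Nat.mul_succ, Nat.add_sub_cancel]
    exact hF.mul_notMem_closure_image_mul_left hd0
  · exact Nat.exists_eq_add_mul_of_dvd_of_le (Dvd.intro _ rfl)
      (AddSubmonoid.dvd_of_mem_closure_image_mul_left hx) hcx
  · rintro ⟨n, rfl⟩
    exact ⟨hmem n, Nat.le_add_right _ _⟩
end

section
/- Let M be a nonzero additive submonoid of ℕ with period d, and let ∼_M be the Bourne congruence on ℕ: m ∼_M m' iff there exist a, b ∈ M with m + a = m' + b. Then the quotient additive monoid ℕ/∼_M is isomorphic, as an additive monoid, to ZMod d (the integers modulo d); in particular the quotient is an abelian group. -/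
/-!
Every element of `M` is a multiple of the period `d`: otherwise its residue modulo `d` would be a
smaller positive difference of nonzero elements of `M`. Conversely, with `a, a + d ∈ M`, any
multiple of `d` is a difference of elements of `M`. Hence `m ∼_M m'` exactly when
`m ≡ m' [MOD d]`, so `∼_M` is the kernel of the surjection `ℕ → ZMod d`.
-/

namespace AddSubmonoid

variable {M : AddSubmonoid ℕ} {a d : ℕ}

theorem dvd_of_mem_of_minimal_diff (hd : 0 < d) (ha : a ∈ M) (ha0 : a ≠ 0) (had : a + d ∈ M)
    (hmin : ∀ e : ℕ, 0 < e → (∃ b ∈ M, b ≠ 0 ∧ b + e ∈ M) → d ≤ e) {x : ℕ} (hx : x ∈ M) :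
    d ∣ x := by
  by_contra hndvd
  set q := x / d
  have hb : q * (a + d) + a ∈ M := M.add_mem (M.nsmul_mem had q) ha
  -- `x % d` is the difference between `q * (a + d) + a` and `(q + 1) * a + x`.
  have hbr : q * (a + d) + a + x % d ∈ M := by
    have hx' : q * (a + d) + a + x % d = (q + 1) • a + x := by
      rw [smul_eq_mul, ← Nat.div_add_mod x d]
      simp only [q, Nat.mul_add_mod_self_left, Nat.mod_mod]
      ring
    exact hx' ▸ M.add_mem (M.nsmul_mem ha (q + 1)) hx
  have hle := hmin (x % d) (Nat.pos_of_ne_zero (mt Nat.dvd_of_mod_eq_zero hndvd))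
    ⟨_, hb, by positivity, hbr⟩
  exact absurd (Nat.mod_lt x hd) (not_lt.mpr hle)

theorem exists_add_eq_add_iff_modEq (ha : a ∈ M) (had : a + d ∈ M) (hdvd : ∀ x ∈ M, d ∣ x)
    (m m' : ℕ) : (∃ b ∈ M, ∃ b' ∈ M, m + b = m' + b') ↔ m ≡ m' [MOD d] := by
  constructor
  · rintro ⟨b, hb, b', hb', hbb'⟩
    calc m ≡ m + b [MOD d] := ((Nat.modEq_zero_iff_dvd.mpr (hdvd b hb)).add_left m).symm
      _ = m' + b' := hbb'
      _ ≡ m' [MOD d] := (Nat.modEq_zero_iff_dvd.mpr (hdvd b' hb')).add_left m'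
  · intro hmod
    -- `m + d * (m' / d) = m' + d * (m / d)`, and `d * k` is the difference of
    -- `k * (a + d)` and `k * a`.
    refine ⟨(m' / d) • (a + d) + (m / d) • a, M.add_mem (M.nsmul_mem had _) (M.nsmul_mem ha _),
      (m / d) • (a + d) + (m' / d) • a, M.add_mem (M.nsmul_mem had _) (M.nsmul_mem ha _), ?_⟩
    have hm := Nat.div_add_mod m d
    have hm' := Nat.div_add_mod m' d
    have hr : m % d = m' % d := hmod
    simp only [smul_eq_mul]
    linarith

end AddSubmonoid

theorem stmt19_general (M : AddSubmonoid ℕ) (d : ℕ) (hd0 : 0 < d)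
    (hdiff : ∃ a ∈ M, a ≠ 0 ∧ a + d ∈ M)
    (hmin : ∀ e : ℕ, 0 < e → (∃ a ∈ M, a ≠ 0 ∧ a + e ∈ M) → d ≤ e)
    (c : AddCon ℕ)
    (hc : ∀ m m' : ℕ, c m m' ↔ ∃ a ∈ M, ∃ b ∈ M, m + a = m' + b) :
    Nonempty (c.Quotient ≃+ ZMod d) := by
  obtain ⟨a, ha, ha0, had⟩ := hdiff
  have hdvd : ∀ x ∈ M, d ∣ x := fun _ ↦
    AddSubmonoid.dvd_of_mem_of_minimal_diff hd0 ha ha0 had hmin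
  obtain rfl : c = AddCon.ker (Nat.castAddMonoidHom (ZMod d)) := by
    ext m m'
    rw [hc, AddSubmonoid.exists_add_eq_add_iff_modEq ha had hdvd, AddCon.ker_rel,
      Nat.coe_castAddMonoidHom, ZMod.natCast_eq_natCast_iff]
  have : NeZero d := NeZero.of_pos hd0
  exact ⟨AddCon.quotientKerEquivOfSurjective _ ZMod.natCast_zmod_surjective⟩

/-- Let `M` be a nonzero additive submonoid of `ℕ` with period
`d` (the least positive difference of `M`) and let `∼_M` be the Bourne
congruence on `ℕ`: `m ∼_M m' ↔ ∃ a b ∈ M, m + a = m' + b`. Then the quotient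
additive monoid `ℕ/∼_M` is isomorphic as an additive monoid to `ZMod d`. -/
theorem stmt19 (M : AddSubmonoid ℕ) (hM : M ≠ ⊥) (d : ℕ) (hd0 : 0 < d)
    (hdiff : ∃ a ∈ M, a ≠ 0 ∧ a + d ∈ M)
    (hmin : ∀ e : ℕ, 0 < e → (∃ a ∈ M, a ≠ 0 ∧ a + e ∈ M) → d ≤ e)
    (c : AddCon ℕ)
    (hc : ∀ m m' : ℕ, c m m' ↔ ∃ a ∈ M, ∃ b ∈ M, m + a = m' + b) :
    Nonempty (c.Quotient ≃+ ZMod d) :=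
  stmt19_general M d hd0 hdiff hmin c hc
end
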